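/- Let α, β, γ ∈ (0,1) with β + γ ≠ 1 and α + γ ≠ 1. Then: (i) for every q ∈ [0, min(1−β, γ)] there exists a constant C > 0, depending only on α, β, γ, q, such that 𝔅_1(a,b) ≤ C · |a|^{−q} · |b|^{−γ+q} for all real a, b with a, b nonzero (and b − a ≠ 0 when needed); (ii) for every q ∈ [0, min(1−α, γ)] there exists a constant C > 0, depending only on α, β, γ, q, such that 𝔅_2(a,b) ≤ C · |a|^{−q} · |b−a|^{−γ+q} for all real a, b with a and b − a nonzero. -/

import Mathlib

open MeasureTheory Real ENNReal

/-- `𝔅_1(a,b) := ∫_0^{1/2} u^{−β} (1−u)^{−α} |au − b|^{−γ} du ∈ [0,∞]`. -/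
noncomputable def B1 (α β γ a b : ℝ) : ℝ≥0∞ :=
  ∫⁻ u in Set.Ioo (0 : ℝ) (1/2),
    ENNReal.ofReal (u ^ (-β) * (1 - u) ^ (-α) * |a * u - b| ^ (-γ))

/-- `𝔅_2(a,b) := ∫_{1/2}^1 u^{−β} (1−u)^{−α} |au − b|^{−γ} du ∈ [0,∞]`. -/
noncomputable def B2 (α β γ a b : ℝ) : ℝ≥0∞ :=
  ∫⁻ u in Set.Ioo (1/2 : ℝ) 1,
    ENNReal.ofReal (u ^ (-β) * (1 - u) ^ (-α) * |a * u - b| ^ (-γ))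

/-!
Since `(1 - u)^{-α} ≤ 2^α` on `(0, 1/2)` and `|a u - b| = |a| |u - b/a|`, part (i) reduces to
the kernel `J(c) = ∫_0^{1/2} u^{-β} |u - c|^{-γ} du` (`b1Kernel`) at `c = b/a`, and
`J(c) ≤ J(|c|)`. For `c ≥ 1` the singularity is away from `(0, 1/2)` and `J(c) ≲ c^{-γ}`.
For `0 < c ≤ 1`, split `(0, 1/2)` at `c/2` and `3c/2`: the pieces near `0` and near `c` are
`O(c^{1-β-γ})` by scaling, and the far piece is at most `3^γ ∫_c^{1/2} u^{-β-γ} du`, which is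
`O(1)` if `β + γ < 1` and `O(c^{1-β-γ})` if `β + γ > 1`. Every exponent
`q ∈ [0, min(1-β, γ)]` interpolates between the two regimes. The reflection `u ↦ 1 - u`
turns `𝔅_2` into `𝔅_1` with `α, β` swapped and `b` replaced by `a - b`.
-/

open Set

lemma setLIntegral_Ioc_rpow {s T : ℝ} (hs : -1 < s) (hT : 0 ≤ T) :
    ∫⁻ u in Ioc 0 T, ENNReal.ofReal (u ^ s) = ENNReal.ofReal (T ^ (s + 1) / (s + 1)) := by
  have hint : IntegrableOn (fun u : ℝ => u ^ s) (Ioc 0 T) :=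
    (intervalIntegrable_iff_integrableOn_Ioc_of_le hT).1
      (intervalIntegral.intervalIntegrable_rpow' hs)
  rw [← ofReal_integral_eq_lintegral_ofReal hint, ← intervalIntegral.integral_of_le hT,
    integral_rpow (Or.inl hs), zero_rpow (by linarith), sub_zero]
  filter_upwards [ae_restrict_mem measurableSet_Ioc] with u hu
  exact rpow_nonneg hu.1.le s

lemma setLIntegral_Ioi_rpow {s T : ℝ} (hs : s < -1) (hT : 0 < T) :
    ∫⁻ u in Ioi T, ENNReal.ofReal (u ^ s) = ENNReal.ofReal (-T ^ (s + 1) / (s + 1)) := by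
  rw [← ofReal_integral_eq_lintegral_ofReal (integrableOn_Ioi_rpow_of_lt hs hT),
    integral_Ioi_rpow_of_lt hs hT]
  filter_upwards [ae_restrict_mem measurableSet_Ioi] with u hu
  exact rpow_nonneg (hT.trans hu).le s

lemma setLIntegral_Icc_abs_sub_rpow_le {s T : ℝ} (hs : -1 < s) (hT : 0 ≤ T) (c : ℝ) :
    ∫⁻ u in Icc (c - T) (c + T), ENNReal.ofReal (|u - c| ^ s)
      ≤ ENNReal.ofReal (2 * (T ^ (s + 1) / (s + 1))) := by
  set f : ℝ → ℝ≥0∞ := fun v => ENNReal.ofReal (|v| ^ s)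
  have hpos : ∫⁻ v in Ioc 0 T, f v = ENNReal.ofReal (T ^ (s + 1) / (s + 1)) := by
    rw [← setLIntegral_Ioc_rpow hs hT]
    refine setLIntegral_congr_fun measurableSet_Ioc fun v hv => ?_
    simp only [f, abs_of_pos hv.1]
  have hneg : ∫⁻ v in Ico (-T) 0, f v = ∫⁻ v in Ioc 0 T, f v := by
    have := (Measure.measurePreserving_neg (volume : Measure ℝ)).setLIntegral_comp_preimage_emb
      (MeasurableEquiv.neg ℝ).measurableEmbedding f (Ioc 0 T)
    simpa [f, neg_Ioc] using this
  calc ∫⁻ u in Icc (c - T) (c + T), f (u - c) = ∫⁻ v in Icc (-T) T, f v := by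
        have := (measurePreserving_sub_right volume c).setLIntegral_comp_preimage_emb
          (MeasurableEquiv.subRight c).measurableEmbedding f (Icc (-T) T)
        rw [← this, preimage_sub_const_Icc, neg_add_eq_sub, add_comm]
    _ ≤ (∫⁻ v in Ico (-T) 0, f v) + ∫⁻ v in Icc 0 T, f v := by
        rw [← Ico_union_Icc_eq_Icc (neg_nonpos.2 hT) hT]
        exact lintegral_union_le _ _ _
    _ = ENNReal.ofReal (2 * (T ^ (s + 1) / (s + 1))) := by
        rw [hneg, ← setLIntegral_congr Ioc_ae_eq_Icc, hpos, two_mul]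
        have hI : 0 ≤ T ^ (s + 1) / (s + 1) := div_nonneg (rpow_nonneg hT _) (by linarith)
        exact (ENNReal.ofReal_add hI hI).symm

lemma div_rpow_neg {x k : ℝ} (hx : 0 ≤ x) (hk : 0 ≤ k) (γ : ℝ) :
    (x / k) ^ (-γ) = k ^ γ * x ^ (-γ) := by
  rw [div_rpow hx hk, rpow_neg hk, div_inv_eq_mul, mul_comm]

lemma setLIntegral_Ioo_rpow_le {s T : ℝ} (hs : s ≠ -1) (hT : 0 ≤ T) :
    ∃ K, 0 ≤ K ∧ ∀ c, 0 < c →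
      ∫⁻ u in Ioo c T, ENNReal.ofReal (u ^ s) ≤ ENNReal.ofReal (K * c ^ min (s + 1) 0) := by
  rcases hs.lt_or_gt with hs | hs
  · refine ⟨-1 / (s + 1), div_nonneg_of_nonpos (by norm_num) (by linarith), fun c hc => ?_⟩
    calc ∫⁻ u in Ioo c T, ENNReal.ofReal (u ^ s)
        ≤ ∫⁻ u in Ioi c, ENNReal.ofReal (u ^ s) := lintegral_mono_set Ioo_subset_Ioi_self
      _ = ENNReal.ofReal (-1 / (s + 1) * c ^ min (s + 1) 0) := by
        rw [setLIntegral_Ioi_rpow hs hc, min_eq_left (by linarith)]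
        ring_nf
  · refine ⟨T ^ (s + 1) / (s + 1), div_nonneg (rpow_nonneg hT _) (by linarith), fun c hc => ?_⟩
    calc ∫⁻ u in Ioo c T, ENNReal.ofReal (u ^ s)
        ≤ ∫⁻ u in Ioc 0 T, ENNReal.ofReal (u ^ s) :=
          lintegral_mono_set fun u hu => ⟨hc.trans hu.1, hu.2.le⟩
      _ = ENNReal.ofReal (T ^ (s + 1) / (s + 1) * c ^ min (s + 1) 0) := by
        rw [setLIntegral_Ioc_rpow hs hT, min_eq_right (by linarith), Real.rpow_zero, mul_one]

noncomputable def b1Kernel (β γ c : ℝ) : ℝ≥0∞ :=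
  ∫⁻ u in Ioo 0 (1 / 2), ENNReal.ofReal (u ^ (-β) * |u - c| ^ (-γ))

lemma B1_le_two_rpow_mul_b1Kernel {α : ℝ} (β γ : ℝ) {a : ℝ} (b : ℝ) (hα : 0 ≤ α)
    (ha : a ≠ 0) :
    B1 α β γ a b ≤ ENNReal.ofReal (2 ^ α * |a| ^ (-γ)) * b1Kernel β γ (b / a) := by
  rw [b1Kernel, ← lintegral_const_mul' _ _ ENNReal.ofReal_ne_top]
  refine setLIntegral_mono' measurableSet_Ioo fun u hu => ?_
  rw [← ENNReal.ofReal_mul (by positivity)]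
  refine ENNReal.ofReal_le_ofReal ?_
  have hscale : |a * u - b| ^ (-γ) = |a| ^ (-γ) * |u - b / a| ^ (-γ) := by
    rw [← mul_rpow (abs_nonneg a) (abs_nonneg _), ← abs_mul, mul_sub, mul_div_cancel₀ b ha]
  have hweight : (1 - u) ^ (-α) ≤ 2 ^ α := by
    calc (1 - u) ^ (-α) ≤ (1 / 2) ^ (-α) :=
          rpow_le_rpow_of_nonpos (by norm_num) (by linarith [hu.2]) (neg_nonpos.2 hα)
      _ = 2 ^ α := by rw [div_rpow_neg zero_le_one zero_le_two, Real.one_rpow, mul_one]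
  calc u ^ (-β) * (1 - u) ^ (-α) * |a * u - b| ^ (-γ)
      = (1 - u) ^ (-α) * (|a| ^ (-γ) * (u ^ (-β) * |u - b / a| ^ (-γ))) := by
        rw [hscale]; ring
    _ ≤ 2 ^ α * (|a| ^ (-γ) * (u ^ (-β) * |u - b / a| ^ (-γ))) := by
        have := hu.1; gcongr
    _ = 2 ^ α * |a| ^ (-γ) * (u ^ (-β) * |u - b / a| ^ (-γ)) := by ring

lemma b1Kernel_le_abs (β : ℝ) {γ : ℝ} (hγ : 0 ≤ γ) (c : ℝ) :
    b1Kernel β γ c ≤ b1Kernel β γ |c| := by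
  refine lintegral_mono_ae ?_
  -- only a.e.: at `u = |c|` the right-hand integrand is `0 ^ (-γ) = 0`
  filter_upwards [ae_restrict_of_ae (Measure.ae_ne volume |c|),
    ae_restrict_mem measurableSet_Ioo] with u hne hu
  refine ENNReal.ofReal_le_ofReal (mul_le_mul_of_nonneg_left ?_ (rpow_nonneg hu.1.le _))
  refine rpow_le_rpow_of_nonpos (abs_pos.2 (sub_ne_zero.2 hne)) ?_ (neg_nonpos.2 hγ)
  simpa [abs_of_pos hu.1] using abs_abs_sub_abs_le_abs_sub u c

lemma setLIntegral_rpow_mul_abs_sub_rpow_Ioc_le {β γ c T : ℝ} (hβ : β < 1) (hγ : 0 ≤ γ)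
    (hT : 0 < T) (hTc : T ≤ c / 2) :
    ∫⁻ u in Ioc 0 T, ENNReal.ofReal (u ^ (-β) * |u - c| ^ (-γ))
      ≤ ENNReal.ofReal ((c / 2) ^ (-γ) * (T ^ (1 - β) / (1 - β))) := by
  calc ∫⁻ u in Ioc 0 T, ENNReal.ofReal (u ^ (-β) * |u - c| ^ (-γ))
      ≤ ∫⁻ u in Ioc 0 T, ENNReal.ofReal ((c / 2) ^ (-γ)) * ENNReal.ofReal (u ^ (-β)) := by
        refine setLIntegral_mono' measurableSet_Ioc fun u hu => ?_
        rw [← ENNReal.ofReal_mul (rpow_nonneg (by linarith) _), mul_comm]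
        refine ENNReal.ofReal_le_ofReal (mul_le_mul_of_nonneg_right ?_ (rpow_nonneg hu.1.le _))
        refine rpow_le_rpow_of_nonpos (by linarith) ?_ (neg_nonpos.2 hγ)
        rw [abs_sub_comm, abs_of_pos (by linarith [hu.2])]
        linarith [hu.2]
    _ = ENNReal.ofReal ((c / 2) ^ (-γ) * (T ^ (1 - β) / (1 - β))) := by
        rw [lintegral_const_mul' _ _ ENNReal.ofReal_ne_top,
          setLIntegral_Ioc_rpow (by linarith) hT.le,
          ← ENNReal.ofReal_mul (rpow_nonneg (by linarith) _), neg_add_eq_sub]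

lemma setLIntegral_rpow_mul_abs_sub_rpow_Icc_le {β γ c : ℝ} (hβ : 0 ≤ β) (hγ : γ < 1)
    (hc : 0 < c) :
    ∫⁻ u in Icc (c - c / 2) (c + c / 2), ENNReal.ofReal (u ^ (-β) * |u - c| ^ (-γ))
      ≤ ENNReal.ofReal ((c / 2) ^ (-β) * (2 * ((c / 2) ^ (1 - γ) / (1 - γ)))) := by
  calc ∫⁻ u in Icc (c - c / 2) (c + c / 2), ENNReal.ofReal (u ^ (-β) * |u - c| ^ (-γ))
      ≤ ∫⁻ u in Icc (c - c / 2) (c + c / 2),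
          ENNReal.ofReal ((c / 2) ^ (-β)) * ENNReal.ofReal (|u - c| ^ (-γ)) := by
        refine setLIntegral_mono' measurableSet_Icc fun u hu => ?_
        rw [← ENNReal.ofReal_mul (by positivity)]
        refine ENNReal.ofReal_le_ofReal (mul_le_mul_of_nonneg_right ?_ (by positivity))
        exact rpow_le_rpow_of_nonpos (by linarith) (by linarith [hu.1]) (neg_nonpos.2 hβ)
    _ ≤ ENNReal.ofReal ((c / 2) ^ (-β))
          * ENNReal.ofReal (2 * ((c / 2) ^ (1 - γ) / (1 - γ))) := by
        rw [lintegral_const_mul' _ _ ENNReal.ofReal_ne_top, ← neg_add_eq_sub γ 1]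
        gcongr
        exact setLIntegral_Icc_abs_sub_rpow_le (by linarith) (by linarith) c
    _ = ENNReal.ofReal ((c / 2) ^ (-β) * (2 * ((c / 2) ^ (1 - γ) / (1 - γ)))) :=
        (ENNReal.ofReal_mul (by positivity)).symm

lemma setLIntegral_rpow_mul_abs_sub_rpow_Ioo_le {β γ c T : ℝ} (hγ : 0 ≤ γ) (hc : 0 < c) :
    ∫⁻ u in Ioo (c + c / 2) T, ENNReal.ofReal (u ^ (-β) * |u - c| ^ (-γ))
      ≤ ENNReal.ofReal (3 ^ γ) * ∫⁻ u in Ioo c T, ENNReal.ofReal (u ^ (-β - γ)) := by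
  rw [← lintegral_const_mul' _ _ ENNReal.ofReal_ne_top]
  refine (setLIntegral_mono' measurableSet_Ioo fun u hu => ?_).trans
    (lintegral_mono_set (Ioo_subset_Ioo_left (by linarith)))
  have hu0 : 0 < u := by linarith [hu.1]
  rw [← ENNReal.ofReal_mul (by positivity)]
  refine ENNReal.ofReal_le_ofReal ?_
  calc u ^ (-β) * |u - c| ^ (-γ) ≤ u ^ (-β) * (u / 3) ^ (-γ) := by
        refine mul_le_mul_of_nonneg_left (rpow_le_rpow_of_nonpos (by positivity) ?_
          (neg_nonpos.2 hγ)) (rpow_nonneg hu0.le _)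
        rw [abs_of_pos (by linarith [hu.1])]
        linarith [hu.1]
    _ = 3 ^ γ * u ^ (-β - γ) := by
        rw [div_rpow_neg hu0.le (by norm_num), sub_eq_add_neg, rpow_add hu0]
        ring

lemma b1Kernel_le_of_one_le {β γ : ℝ} (hβ : β < 1) (hγ : 0 ≤ γ) :
    ∃ C, 0 < C ∧ ∀ c, 1 ≤ c → b1Kernel β γ c ≤ ENNReal.ofReal (C * c ^ (-γ)) := by
  refine ⟨2 ^ γ * ((1 / 2) ^ (1 - β) / (1 - β)),
    mul_pos (by positivity) (div_pos (by positivity) (by linarith)), fun c hc => ?_⟩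
  calc b1Kernel β γ c
      ≤ ∫⁻ u in Ioc 0 (1 / 2), ENNReal.ofReal (u ^ (-β) * |u - c| ^ (-γ)) :=
        lintegral_mono_set Ioo_subset_Ioc_self
    _ ≤ ENNReal.ofReal ((c / 2) ^ (-γ) * ((1 / 2) ^ (1 - β) / (1 - β))) :=
        setLIntegral_rpow_mul_abs_sub_rpow_Ioc_le hβ hγ (by norm_num) (by linarith)
    _ = ENNReal.ofReal (2 ^ γ * ((1 / 2) ^ (1 - β) / (1 - β)) * c ^ (-γ)) := by
        rw [div_rpow_neg (by linarith) zero_le_two]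
        ring_nf

lemma b1Kernel_le_of_le_one {β γ : ℝ} (hβ0 : 0 ≤ β) (hβ1 : β < 1) (hγ0 : 0 ≤ γ)
    (hγ1 : γ < 1) (h : β + γ ≠ 1) :
    ∃ C, 0 < C ∧ ∀ c, 0 < c → c ≤ 1 →
      b1Kernel β γ c ≤ ENNReal.ofReal (C * c ^ min (1 - β - γ) 0) := by
  obtain ⟨K, hK, htail⟩ := setLIntegral_Ioo_rpow_le (s := -β - γ) (T := 1 / 2)
    (by contrapose! h; linarith) (by norm_num)
  set m := min (1 - β - γ) 0
  set P := (1 / (1 - β) + 2 / (1 - γ)) / 2 ^ m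
  have hP : 0 < P := div_pos (add_pos (div_pos one_pos (by linarith))
    (div_pos two_pos (by linarith))) (by positivity)
  refine ⟨P + 3 ^ γ * K, by positivity, fun c hc hc1 => ?_⟩
  have hcover : Ioo (0 : ℝ) (1 / 2) ⊆
      Ioc 0 (c / 2) ∪ (Icc (c - c / 2) (c + c / 2) ∪ Ioo (c + c / 2) (1 / 2)) := by
    intro u hu
    rcases le_or_gt u (c / 2) with h1 | h1
    · exact Or.inl ⟨hu.1, h1⟩
    rcases le_or_gt u (c + c / 2) with h2 | h2
    · exact Or.inr (Or.inl ⟨by linarith, h2⟩)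
    · exact Or.inr (Or.inr ⟨h2, hu.2⟩)
  have hnear : (c / 2) ^ (-γ) * ((c / 2) ^ (1 - β) / (1 - β))
      + (c / 2) ^ (-β) * (2 * ((c / 2) ^ (1 - γ) / (1 - γ))) ≤ P * c ^ m := by
    have hx : 0 < c / 2 := by positivity
    have h1 : (c / 2) ^ (-γ) * (c / 2) ^ (1 - β) = (c / 2) ^ (1 - β - γ) := by
      rw [← rpow_add hx]; ring_nf
    have h2 : (c / 2) ^ (-β) * (c / 2) ^ (1 - γ) = (c / 2) ^ (1 - β - γ) := by
      rw [← rpow_add hx]; ring_nf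
    calc _ = (c / 2) ^ (-γ) * (c / 2) ^ (1 - β) / (1 - β)
          + 2 * ((c / 2) ^ (-β) * (c / 2) ^ (1 - γ)) / (1 - γ) := by ring
      _ = (c / 2) ^ (1 - β - γ) * (1 / (1 - β) + 2 / (1 - γ)) := by rw [h1, h2]; ring
      _ ≤ (c / 2) ^ m * (1 / (1 - β) + 2 / (1 - γ)) :=
          mul_le_mul_of_nonneg_right
            (rpow_le_rpow_of_exponent_ge hx (by linarith) (min_le_left _ _))
            (add_nonneg (div_nonneg zero_le_one (by linarith))
              (div_nonneg zero_le_two (by linarith)))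
      _ = P * c ^ m := by
          rw [div_rpow hc.le zero_le_two]; ring
  have hfar := htail c hc
  rw [show -β - γ + 1 = 1 - β - γ by ring] at hfar
  calc b1Kernel β γ c
      ≤ (∫⁻ u in Ioc 0 (c / 2), ENNReal.ofReal (u ^ (-β) * |u - c| ^ (-γ)))
        + ((∫⁻ u in Icc (c - c / 2) (c + c / 2),
              ENNReal.ofReal (u ^ (-β) * |u - c| ^ (-γ)))
        + ∫⁻ u in Ioo (c + c / 2) (1 / 2), ENNReal.ofReal (u ^ (-β) * |u - c| ^ (-γ))) :=
        (lintegral_mono_set hcover).trans ((lintegral_union_le _ _ _).trans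
          (add_le_add le_rfl (lintegral_union_le _ _ _)))
    _ ≤ ENNReal.ofReal ((c / 2) ^ (-γ) * ((c / 2) ^ (1 - β) / (1 - β)))
        + (ENNReal.ofReal ((c / 2) ^ (-β) * (2 * ((c / 2) ^ (1 - γ) / (1 - γ))))
        + ENNReal.ofReal (3 ^ γ) * ENNReal.ofReal (K * c ^ m)) := by
        gcongr
        · exact setLIntegral_rpow_mul_abs_sub_rpow_Ioc_le hβ1 hγ0 (by positivity) le_rfl
        · exact setLIntegral_rpow_mul_abs_sub_rpow_Icc_le hβ0 hγ1 hc
        · exact (setLIntegral_rpow_mul_abs_sub_rpow_Ioo_le hγ0 hc).trans (by gcongr)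
    _ ≤ ENNReal.ofReal ((P + 3 ^ γ * K) * c ^ m) := by
        rw [← ENNReal.ofReal_mul (by positivity), ← ENNReal.ofReal_add (by positivity)
          (by positivity), ← ENNReal.ofReal_add (by positivity) (by positivity)]
        exact ENNReal.ofReal_le_ofReal (by linarith)

lemma b1Kernel_le_abs_rpow {β γ q : ℝ} (hβ0 : 0 ≤ β) (hβ1 : β < 1) (hγ0 : 0 ≤ γ)
    (hγ1 : γ < 1) (h : β + γ ≠ 1) (hq : q ∈ Icc 0 (min (1 - β) γ)) :
    ∃ C, 0 < C ∧ ∀ c, c ≠ 0 →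
      b1Kernel β γ c ≤ ENNReal.ofReal (C * |c| ^ (-γ + q)) := by
  obtain ⟨C₁, hC₁, hlarge⟩ := b1Kernel_le_of_one_le hβ1 hγ0
  obtain ⟨C₂, hC₂, hsmall⟩ := b1Kernel_le_of_le_one hβ0 hβ1 hγ0 hγ1 h
  refine ⟨C₁ + C₂, add_pos hC₁ hC₂, fun c hc => (b1Kernel_le_abs β hγ0 c).trans ?_⟩
  have hc0 : 0 < |c| := abs_pos.2 hc
  rcases le_total 1 |c| with h1 | h1
  · refine (hlarge |c| h1).trans (ENNReal.ofReal_le_ofReal ?_)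
    exact mul_le_mul (by linarith) (rpow_le_rpow_of_exponent_le h1 (by linarith [hq.1]))
      (by positivity) (by linarith)
  · refine (hsmall |c| hc0 h1).trans (ENNReal.ofReal_le_ofReal ?_)
    have hexp : -γ + q ≤ min (1 - β - γ) 0 :=
      le_min (by linarith [hq.2, min_le_left (1 - β) γ])
        (by linarith [hq.2, min_le_right (1 - β) γ])
    exact mul_le_mul (by linarith) (rpow_le_rpow_of_exponent_ge hc0 h1 hexp)
      (by positivity) (by linarith)

lemma B1_le_rpow_mul_rpow {α β γ q : ℝ} (hα : 0 ≤ α) (hβ0 : 0 ≤ β) (hβ1 : β < 1)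
    (hγ0 : 0 ≤ γ) (hγ1 : γ < 1) (h : β + γ ≠ 1) (hq : q ∈ Icc 0 (min (1 - β) γ)) :
    ∃ C, 0 < C ∧ ∀ a b : ℝ, a ≠ 0 → b ≠ 0 →
      B1 α β γ a b ≤ ENNReal.ofReal (C * |a| ^ (-q) * |b| ^ (-γ + q)) := by
  obtain ⟨C, hC, hkernel⟩ := b1Kernel_le_abs_rpow hβ0 hβ1 hγ0 hγ1 h hq
  refine ⟨2 ^ α * C, by positivity, fun a b ha hb => ?_⟩
  have ha0 : 0 < |a| := abs_pos.2 ha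
  have hpow : |a| ^ (-γ) * |b / a| ^ (-γ + q) = |a| ^ (-q) * |b| ^ (-γ + q) := by
    have hsplit : |a| ^ (-γ) = |a| ^ (-q) * |a| ^ (-γ + q) := by
      rw [← rpow_add ha0]; ring_nf
    rw [hsplit, abs_div, div_rpow (abs_nonneg b) ha0.le]
    field_simp [(rpow_pos_of_pos ha0 (-γ + q)).ne']
  calc B1 α β γ a b ≤ ENNReal.ofReal (2 ^ α * |a| ^ (-γ)) * b1Kernel β γ (b / a) :=
        B1_le_two_rpow_mul_b1Kernel β γ b hα ha
    _ ≤ ENNReal.ofReal (2 ^ α * |a| ^ (-γ)) * ENNReal.ofReal (C * |b / a| ^ (-γ + q)) := by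
        gcongr
        exact hkernel _ (div_ne_zero hb ha)
    _ = ENNReal.ofReal (2 ^ α * C * |a| ^ (-q) * |b| ^ (-γ + q)) := by
        rw [← ENNReal.ofReal_mul (by positivity)]
        congr 1
        linear_combination (2 ^ α * C) * hpow

lemma B2_eq_B1 (α β γ a b : ℝ) : B2 α β γ a b = B1 β α γ a (a - b) := by
  have hpre : (fun x : ℝ => 1 - x) ⁻¹' Ioo (1 / 2) 1 = Ioo 0 (1 / 2) := by
    rw [preimage_const_sub_Ioo]; norm_num
  rw [B2, ← (Measure.measurePreserving_sub_left volume 1).setLIntegral_comp_preimage_emb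
    (MeasurableEquiv.subLeft 1).measurableEmbedding _ _, hpre, B1]
  refine setLIntegral_congr_fun measurableSet_Ioo fun u _ => ?_
  rw [_root_.sub_sub_cancel, abs_sub_comm]
  ring_nf

/-- For `α, β, γ ∈ (0,1)` with `β + γ ≠ 1` and `α + γ ≠ 1`:
(i) for every `q ∈ [0, min(1−β, γ)]` there is `C > 0` with
`𝔅_1(a,b) ≤ C |a|^{−q} |b|^{−γ+q}` for all `a, b, b−a` nonzero;
(ii) for every `q ∈ [0, min(1−α, γ)]` there is `C > 0` with
`𝔅_2(a,b) ≤ C |a|^{−q} |b−a|^{−γ+q}` for all `a` and `b−a` nonzero. -/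
theorem B1_B2_bounds (α β γ : ℝ) (hα : α ∈ Set.Ioo (0 : ℝ) 1)
    (hβ : β ∈ Set.Ioo (0 : ℝ) 1) (hγ : γ ∈ Set.Ioo (0 : ℝ) 1)
    (h1 : β + γ ≠ 1) (h2 : α + γ ≠ 1) :
    (∀ q : ℝ, q ∈ Set.Icc 0 (min (1 - β) γ) →
      ∃ C : ℝ, 0 < C ∧ ∀ a b : ℝ, a ≠ 0 → b ≠ 0 → b - a ≠ 0 →
        B1 α β γ a b ≤ ENNReal.ofReal (C * |a| ^ (-q) * |b| ^ (-γ + q))) ∧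
    (∀ q : ℝ, q ∈ Set.Icc 0 (min (1 - α) γ) →
      ∃ C : ℝ, 0 < C ∧ ∀ a b : ℝ, a ≠ 0 → b - a ≠ 0 →
        B2 α β γ a b ≤ ENNReal.ofReal (C * |a| ^ (-q) * |b - a| ^ (-γ + q))) := by
  refine ⟨fun q hq => ?_, fun q hq => ?_⟩
  · obtain ⟨C, hC, hB1⟩ := B1_le_rpow_mul_rpow hα.1.le hβ.1.le hβ.2 hγ.1.le hγ.2 h1 hq
    exact ⟨C, hC, fun a b ha hb _ => hB1 a b ha hb⟩
  · obtain ⟨C, hC, hB1⟩ := B1_le_rpow_mul_rpow hβ.1.le hα.1.le hα.2 hγ.1.le hγ.2 h2 hq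
    refine ⟨C, hC, fun a b ha hba => ?_⟩
    rw [B2_eq_B1, abs_sub_comm b a]
    exact hB1 a (a - b) ha (sub_ne_zero.2 (Ne.symm (sub_ne_zero.1 hba)))
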